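/- arXiv:1506.08271 — 3 statements merged into one kernel-verified Lean document; each statement's English description precedes it below -/
import Mathlib

section
/- Given a G-family of quandles (M, {*^g}_{g∈G}), the set M×G with operations (x,g)*(y,h) := (x*^h y, h⁻¹gh) and (x,g)(x,h) := (x, gh) (the group operation defined on each fiber {x}×G) is a multiple conjugation quandle, where the components are the sets {x}×G for x∈M. -/
/-- A multiple conjugation quandle: a set `X` partitioned into components indexed by `Λ`
(via `idx`), each component carrying a group structure (`mul`, `one`, `inv`, meaningful
within a single component), together with a quandle operation `op` satisfying the MCQ axioms. -/
structure MCQ (Λ X : Type) where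
  idx : X → Λ
  mul : X → X → X
  one : Λ → X
  inv : X → X
  op : X → X → X
  idx_one : ∀ l, idx (one l) = l
  idx_mul : ∀ a b, idx a = idx b → idx (mul a b) = idx a
  idx_inv : ∀ a, idx (inv a) = idx a
  mul_assoc : ∀ a b c, idx a = idx b → idx b = idx c →
    mul (mul a b) c = mul a (mul b c)
  one_mul : ∀ a, mul (one (idx a)) a = a
  mul_one : ∀ a, mul a (one (idx a)) = a
  inv_mul : ∀ a, mul (inv a) a = one (idx a)
  mul_inv : ∀ a, mul a (inv a) = one (idx a)
  conj : ∀ a b, idx a = idx b → op a b = mul (inv b) (mul a b)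
  op_one : ∀ x l, op x (one l) = x
  op_mul_right : ∀ x a b, idx a = idx b → op x (mul a b) = op (op x a) b
  self_distrib : ∀ x y z, op (op x y) z = op (op x z) (op y z)
  idx_op : ∀ a b x, idx a = idx b → idx (op a x) = idx (op b x)
  mul_op : ∀ a b x, idx a = idx b → op (mul a b) x = mul (op a x) (op b x)

/-- A `G`-family of quandles: a nonempty set `M` with a family of binary
operations `op g : M × M → M` (`g ∈ G`) satisfying the `G`-family axioms. -/
structure GFamily (G M : Type) [Group G] [Nonempty M] where
  op : G → M → M → M
  idem : ∀ g x, op g x x = x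
  op_mul : ∀ g h x y, op (g * h) x y = op h (op g x y) y
  op_one : ∀ x y, op 1 x y = x
  dist : ∀ g h x y z, op h (op g x y) z = op (h⁻¹ * g * h) (op h x z) (op h y z)

/-- Given a `G`-family of quandles `(M, {*^g})`, the set `M × G` with
`(x,g) * (y,h) := (x *^h y, h⁻¹ g h)` and fiberwise group multiplication
`(x,g)(x,h) := (x, gh)` is a multiple conjugation quandle whose components
are the fibers `{x} × G` (`x ∈ M`, recorded by `idx = Prod.fst`). -/
theorem gfamily_to_mcq (G M : Type) [Group G] [Nonempty M] (F : GFamily G M) :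
    ∃ Qm : MCQ M (M × G),
      Qm.idx = Prod.fst ∧
      (∀ p q : M × G, Qm.op p q = (F.op q.2 p.1 q.1, q.2⁻¹ * p.2 * q.2)) ∧
      (∀ p q : M × G, p.1 = q.1 → Qm.mul p q = (p.1, p.2 * q.2)) ∧
      (∀ x : M, Qm.one x = (x, 1)) ∧
      (∀ p : M × G, Qm.inv p = (p.1, p.2⁻¹)) := by
  refine ⟨{
    idx := Prod.fst
    mul := fun p q => (p.1, p.2 * q.2)
    one := fun x => (x, 1)
    inv := fun p => (p.1, p.2⁻¹)
    op := fun p q => (F.op q.2 p.1 q.1, q.2⁻¹ * p.2 * q.2)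
    idx_one := fun l => rfl
    idx_mul := fun a b _ => rfl
    idx_inv := fun a => rfl
    mul_assoc := fun a b c _ _ => by simp [mul_assoc]
    one_mul := fun a => by simp
    mul_one := fun a => by simp
    inv_mul := fun a => by simp
    mul_inv := fun a => by simp
    conj := fun a b h => by
      simp only [Prod.mk.injEq]
      constructor
      · rw [h]; exact F.idem b.2 b.1
      · group
    op_one := fun x l => by simp [F.op_one]
    op_mul_right := fun x a b h => by
      simp only [Prod.mk.injEq]
      constructor
      · rw [F.op_mul, h]
      · group
    self_distrib := fun x y z => by
      simp only [Prod.mk.injEq]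
      constructor
      · exact F.dist y.2 z.2 x.1 y.1 z.1
      · group
    idx_op := fun a b x h => by simp [h]
    mul_op := fun a b x h => by
      simp only [Prod.mk.injEq]
      exact ⟨trivial, by group⟩
  }, rfl, fun p q => rfl, fun p q h => rfl, fun x => rfl, fun p => rfl⟩
end

section
/- Let (X,*) be a quandle such that there is a minimal positive integer m with x *^m y = x for all x,y ∈ X (where x *^n y := S_y^n(x)). Then (X, {*^n}_{n ∈ ℤ/mℤ}) is a ℤ/mℤ-family of quandles. -/
/-- Let `(X, *)` be a quandle (idempotent, right-bijective, right
self-distributive binary operation `op`) such that `m` is the minimal positive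
integer with `x *^m y = x` for all `x, y` (where `x *^n y = S_y^n (x)` is the
`n`-fold right translation). Then the operations `*^n` for `n ∈ ℤ/mℤ` form a
`ℤ/mℤ`-family of quandles on `X`. -/
theorem quandle_zmod_family (X : Type) (op : X → X → X)
    (hidem : ∀ a : X, op a a = a)
    (hbij : ∀ b : X, Function.Bijective (fun x => op x b))
    (hdist : ∀ a b c : X, op (op a b) c = op (op a c) (op b c))
    (m : ℕ) (hm : 0 < m)
    (hiter : ∀ x y : X, (fun a => op a y)^[m] x = x)
    (hmin : ∀ k : ℕ, 0 < k → (∀ x y : X, (fun a => op a y)^[k] x = x) → m ≤ k) :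
    ∀ f : ZMod m → X → X → X,
      (f = fun n x y => (fun a => op a y)^[n.val] x) →
      (∀ (n : ZMod m) (x : X), f n x x = x) ∧
      (∀ (n k : ZMod m) (x y : X), f (n + k) x y = f k (f n x y) y) ∧
      (∀ x y : X, f 0 x y = x) ∧
      (∀ (n k : ZMod m) (x y z : X), f k (f n x y) z = f n (f k x z) (f k y z)) := by
  intro f hf
  subst hf
  haveI : NeZero m := ⟨hm.ne'⟩
  -- iterate with same element is fixed
  have hfix : ∀ (n : ℕ) (x : X), (fun a => op a x)^[n] x = x := by
    intro n x
    induction n with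
    | zero => rfl
    | succ k ih => rw [Function.iterate_succ_apply', ih]; exact hidem x
  -- reduce exponent mod m
  have hmul : ∀ (q r : ℕ) (x y : X),
      (fun a => op a y)^[m * q + r] x = (fun a => op a y)^[r] x := by
    intro q
    induction q with
    | zero => intro r x y; simp
    | succ j ih =>
        intro r x y
        rw [Nat.mul_succ, Nat.add_right_comm, Function.iterate_add_apply,
          hiter, ih]
  have hmod : ∀ (n : ℕ) (x y : X),
      (fun a => op a y)^[n] x = (fun a => op a y)^[n % m] x := by
    intro n x y
    conv_lhs => rw [← Nat.div_add_mod n m]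
    exact hmul _ _ x y
  -- single-step distributivity over iterates
  have hstep : ∀ (n : ℕ) (x y z : X),
      op ((fun a => op a y)^[n] x) z
        = (fun a => op a (op y z))^[n] (op x z) := by
    intro n x y z
    induction n with
    | zero => rfl
    | succ k ih =>
        rw [Function.iterate_succ_apply', Function.iterate_succ_apply',
          hdist, ih]
  -- full distributivity
  have hdistit : ∀ (k n : ℕ) (x y z : X),
      (fun a => op a z)^[k] ((fun a => op a y)^[n] x)
        = (fun a => op a ((fun a => op a z)^[k] y))^[n]
            ((fun a => op a z)^[k] x) := by
    intro k
    induction k with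
    | zero => intro n x y z; rfl
    | succ j ih =>
        intro n x y z
        rw [Function.iterate_succ_apply', Function.iterate_succ_apply',
          Function.iterate_succ_apply', ih, hstep]
  refine ⟨?_, ?_, ?_, ?_⟩
  · intro n x; exact hfix n.val x
  · intro n k x y
    simp only
    rw [← Function.iterate_add_apply, Nat.add_comm k.val n.val,
      hmod (n.val + k.val), ZMod.val_add]
  · intro x y; simp
  · intro n k x y z
    exact hdistit k.val n.val x y z
end

section
/- Let X = ⊔_λ G_λ be a multiple conjugation quandle, Y = {y₀} trivial, and A an abelian group. A map φ: P₂(X)_Y → A vanishing on D₂(X)_Y is a 2-cocycle if and only if X×A = ⊔_λ (G_λ×A), with operations (a,s)*(b,t) := (a*b, s + φ(⟨a⟩⟨b⟩)) and (a,s)(b,t) := (ab, s+t+φ(⟨a,b⟩)) (the latter for a,b in the same component), is a multiple conjugation quandle. -/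
private lemma aux_cancel {A : Type} [AddCommGroup A] {x y e : A}
    (he : e = 0) (h : x = y + e) : x = y := by rw [he, add_zero] at h; exact h

private lemma aux_cancel2 {A : Type} [AddCommGroup A] {x y e f : A}
    (he : e = 0) (hf : f = 0) (h : x = y + e - f) : x = y := by
  rw [he, hf, add_zero, sub_zero] at h; exact h

private lemma aux_rev {A : Type} [AddCommGroup A] {x y e : A}
    (h : x = y) (he : e = y - x) : e = 0 := by rw [he, h, sub_self]

/-- Let `X = ⊔ G_λ` be a multiple conjugation quandle, `Y = {y₀}` trivial, and
`A` an abelian group. A map `φ` on 2-dimensional prismatic generators (given by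
`φ₂ a b = φ(⟨a⟩⟨b⟩)` and `φ₁ a b = φ(⟨a,b⟩)`, the latter for `a, b` in one
component) vanishing on the decomposition degeneracies `D₂(X)_Y` is a
2-cocycle (i.e. vanishes on the boundaries of all four kinds of 3-dimensional
generators) if and only if `X × A = ⊔ (G_λ × A)`, with operations
`(a,s) * (b,t) := (a*b, s + φ₂ a b)` and `(a,s)(b,t) := (ab, s + t + φ₁ a b)`
(the latter for `a, b` in one component), is a multiple conjugation quandle. -/
theorem two_cocycle_iff_extension_mcq {Λ X : Type} (Q : MCQ Λ X)
    (A : Type) [AddCommGroup A] (φ₂ φ₁ : X → X → A)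
    (hD : ∀ a b : X, Q.idx a = Q.idx b →
      φ₂ a b - φ₁ a b + φ₁ b (Q.op a b) = 0) :
    (((∀ a b c : X, Q.idx a = Q.idx b → Q.idx b = Q.idx c →
        φ₁ b c - φ₁ (Q.mul a b) c + φ₁ a (Q.mul b c) - φ₁ a b = 0) ∧
      (∀ a b c : X, Q.idx b = Q.idx c →
        -φ₂ (Q.op a b) c + φ₂ a (Q.mul b c) - φ₂ a b = 0) ∧
      (∀ a b c : X,
        φ₂ a c + φ₂ (Q.op a c) (Q.op b c) - φ₂ (Q.op a b) c - φ₂ a b = 0) ∧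
      (∀ a b x : X, Q.idx a = Q.idx b →
        φ₂ b x - φ₂ (Q.mul a b) x + φ₂ a x
          + φ₁ (Q.op a x) (Q.op b x) - φ₁ a b = 0))
    ↔
    ∃ Qe : MCQ Λ (X × A),
      (∀ p : X × A, Qe.idx p = Q.idx p.1) ∧
      (∀ p q : X × A, Qe.op p q = (Q.op p.1 q.1, p.2 + φ₂ p.1 q.1)) ∧
      (∀ p q : X × A, Q.idx p.1 = Q.idx q.1 →
        Qe.mul p q = (Q.mul p.1 q.1, p.2 + q.2 + φ₁ p.1 q.1))) := by
  constructor
  · rintro ⟨h1, h2, h3, h4⟩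
    -- basic consequences
    have hone_mul : ∀ l (a : X), Q.idx a = l → Q.mul (Q.one l) a = a := by
      intro l a h
      have := Q.one_mul a; rwa [h] at this
    have hmul_one : ∀ l (a : X), Q.idx a = l → Q.mul a (Q.one l) = a := by
      intro l a h
      have := Q.mul_one a; rwa [h] at this
    have hee : ∀ l, Q.mul (Q.one l) (Q.one l) = Q.one l := fun l =>
      hone_mul l (Q.one l) (Q.idx_one l)
    have hL : ∀ l (a : X), Q.idx a = l →
        φ₁ (Q.one l) a = φ₁ (Q.one l) (Q.one l) := by
      intro l a h
      have h0 := h1 (Q.one l) (Q.one l) a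
        (by rfl) (by rw [Q.idx_one, h])
      rw [hee, hone_mul l a h] at h0
      exact aux_cancel h0 (by abel)
    have hR : ∀ l (a : X), Q.idx a = l →
        φ₁ a (Q.one l) = φ₁ (Q.one l) (Q.one l) := by
      intro l a h
      have h0 := h1 a (Q.one l) (Q.one l)
        (by rw [Q.idx_one, h]) (by rfl)
      rw [hee, hmul_one l a h] at h0
      exact aux_cancel (neg_eq_zero.mpr h0) (by abel)
    have hInv : ∀ a : X, φ₁ (Q.inv a) a = φ₁ a (Q.inv a) := by
      intro a
      have h0 := h1 a (Q.inv a) a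
        (Q.idx_inv a).symm (Q.idx_inv a)
      rw [Q.mul_inv, Q.inv_mul,
        hL (Q.idx a) a rfl, hR (Q.idx a) a rfl] at h0
      exact aux_cancel h0 (by abel)
    have hop_e : ∀ (x : X) l, φ₂ x (Q.one l) = 0 := by
      intro x l
      have h0 := h2 x (Q.one l) (Q.one l) rfl
      rw [hee, Q.op_one] at h0
      exact aux_cancel (neg_eq_zero.mpr h0) (by abel)
    refine ⟨⟨fun p => Q.idx p.1,
      fun p q => (Q.mul p.1 q.1, p.2 + q.2 + φ₁ p.1 q.1),
      fun l => (Q.one l, -φ₁ (Q.one l) (Q.one l)),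
      fun p => (Q.inv p.1, -p.2 - φ₁ p.1 (Q.inv p.1)
        - φ₁ (Q.one (Q.idx p.1)) (Q.one (Q.idx p.1))),
      fun p q => (Q.op p.1 q.1, p.2 + φ₂ p.1 q.1),
      Q.idx_one, fun p q h => Q.idx_mul p.1 q.1 h, fun p => Q.idx_inv p.1,
      ?_, ?_, ?_, ?_, ?_, ?_, ?_, ?_, ?_,
      fun p q r h => Q.idx_op p.1 q.1 r.1 h, ?_⟩,
      fun _ => rfl, fun _ _ => rfl, fun _ _ _ => rfl⟩
    -- mul_assoc
    · intro p q r h h'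
      beta_reduce
      dsimp only
      refine Prod.ext (Q.mul_assoc p.1 q.1 r.1 h h') ?_
      dsimp only
      exact aux_cancel (neg_eq_zero.mpr (h1 p.1 q.1 r.1 h h')) (by abel)
    -- one_mul
    · intro p
      beta_reduce
      dsimp only
      refine Prod.ext (Q.one_mul p.1) ?_
      dsimp only
      rw [hL (Q.idx p.1) p.1 rfl]
      abel
    -- mul_one
    · intro p
      beta_reduce
      dsimp only
      refine Prod.ext (Q.mul_one p.1) ?_
      dsimp only
      rw [hR (Q.idx p.1) p.1 rfl]
      abel
    -- inv_mul
    · intro p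
      beta_reduce
      dsimp only
      refine Prod.ext (Q.inv_mul p.1) ?_
      dsimp only
      rw [hInv p.1]
      abel
    -- mul_inv
    · intro p
      beta_reduce
      dsimp only
      refine Prod.ext (Q.mul_inv p.1) ?_
      dsimp only
      abel
    -- conj
    · intro p q h
      beta_reduce
      dsimp only
      refine Prod.ext (Q.conj p.1 q.1 h) ?_
      dsimp only
      have h' : Q.idx p.1 = Q.idx q.1 := h
      have hc := Q.conj p.1 q.1 h'
      have hiab : Q.idx (Q.mul p.1 q.1) = Q.idx q.1 := by
        rw [Q.idx_mul p.1 q.1 h', h']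
      have h0 := h1 q.1 (Q.inv q.1) (Q.mul p.1 q.1)
        (Q.idx_inv q.1).symm (by rw [Q.idx_inv, hiab])
      rw [Q.mul_inv, ← hc, hL (Q.idx q.1) (Q.mul p.1 q.1) hiab] at h0
      exact aux_cancel2 (hD p.1 q.1 h') h0 (by abel)
    -- op_one
    · intro p l
      beta_reduce
      dsimp only
      refine Prod.ext (Q.op_one p.1 l) ?_
      dsimp only
      rw [hop_e p.1 l]
      abel
    -- op_mul_right
    · intro p q r h
      beta_reduce
      dsimp only
      refine Prod.ext (Q.op_mul_right p.1 q.1 r.1 h) ?_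
      dsimp only
      exact aux_cancel (h2 p.1 q.1 r.1 h) (by abel)
    -- self_distrib
    · intro p q r
      beta_reduce
      dsimp only
      refine Prod.ext (Q.self_distrib p.1 q.1 r.1) ?_
      dsimp only
      exact aux_cancel (neg_eq_zero.mpr (h3 p.1 q.1 r.1)) (by abel)
    -- mul_op
    · intro p q r h
      beta_reduce
      dsimp only
      refine Prod.ext (Q.mul_op p.1 q.1 r.1 h) ?_
      dsimp only
      exact aux_cancel (neg_eq_zero.mpr (h4 p.1 q.1 r.1 h)) (by abel)
  · rintro ⟨Qe, hidx, hop, hmul⟩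
    have hidx2 : ∀ p q : X × A, Q.idx p.1 = Q.idx q.1 → Qe.idx p = Qe.idx q := by
      intro p q h; rw [hidx, hidx, h]
    refine ⟨?_, ?_, ?_, ?_⟩
    · intro a b c hab hbc
      have h := Qe.mul_assoc (a, 0) (b, 0) (c, 0)
        (hidx2 _ _ hab) (hidx2 _ _ hbc)
      rw [hmul (a,0) (b,0) hab, hmul (b,0) (c,0) hbc,
        hmul _ _ (by simpa using (Q.idx_mul a b hab).trans (hab.trans hbc)),
        hmul _ _ (by simpa using hab.trans (Q.idx_mul b c hbc).symm)] at h
      have h' := congrArg Prod.snd h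
      dsimp at h'
      exact aux_rev h' (by abel)
    · intro a b c hbc
      have h := Qe.op_mul_right (a, 0) (b, 0) (c, 0) (hidx2 _ _ hbc)
      rw [hmul (b,0) (c,0) hbc, hop, hop, hop] at h
      have h' := congrArg Prod.snd h
      dsimp at h'
      exact aux_rev h'.symm (by abel)
    · intro a b c
      have h := Qe.self_distrib (a, 0) (b, 0) (c, 0)
      rw [hop, hop, hop, hop, hop] at h
      have h' := congrArg Prod.snd h
      dsimp at h'
      exact aux_rev h' (by abel)
    · intro a b x hab
      have h := Qe.mul_op (a, 0) (b, 0) (x, 0) (hidx2 _ _ hab)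
      rw [hmul (a,0) (b,0) hab, hop, hop, hop,
        hmul _ _ (by simpa using Q.idx_op a b x hab)] at h
      have h' := congrArg Prod.snd h
      dsimp at h'
      exact aux_rev h' (by abel)
end
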